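/- Let X > 0 be a random variable with P[X = 1] < 1. Then the function F: (0,1) → ℝ, F(p) = E[1/(p + (1−p)·X)], is continuously differentiable and strictly convex on (0,1), with F(p) → E[X⁻¹] as p → 0 and F′(p) → E[X] − 1 as p → 1 (both limits possibly +∞). -/

import Mathlib

/-!
The integrand `p ↦ 1 / (p + (1 - p) x)` is the strictly convex function `y ↦ y⁻¹` composed with
an affine map of `p` that is injective unless `x = 1`; averaging over `X`, which differs from `1`
with positive probability, makes `F` strictly convex. On `[a, b] ⊆ (0, 1)` the `p`-derivative of
the integrand is bounded by `1 / (a (1 - b)) + 1 / a²`, which justifies differentiating under the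
integral and the continuity of `F'`. At both ends of the interval Fatou's lemma gives the lower
bound for the limit, and the pointwise bounds `1 / (p + (1 - p) x) ≤ (1 - p)⁻¹ x⁻¹` and
`(x - 1) / (p + (1 - p) x)² ≤ x - 1` give the upper bound.
-/

open MeasureTheory Set Filter Topology
open scoped ENNReal

noncomputable def mixInv (p x : ℝ) : ℝ := 1 / (p + (1 - p) * x)

noncomputable def mixInvDeriv (p x : ℝ) : ℝ := (x - 1) / (p + (1 - p) * x) ^ 2

theorem StrictConvexOn.comp_affineMap {𝕜 E F β : Type*} [Ring 𝕜] [PartialOrder 𝕜]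
    [AddCommGroup E] [AddCommGroup F] [Module 𝕜 E] [Module 𝕜 F] [AddCommMonoid β]
    [PartialOrder β] [SMul 𝕜 β] {f : F → β} {g : E →ᵃ[𝕜] F} (hg : Function.Injective g)
    {s : Set F} (hf : StrictConvexOn 𝕜 s f) : StrictConvexOn 𝕜 (g ⁻¹' s) (f ∘ g) :=
  ⟨hf.1.affine_preimage _, fun x hx y hy hxy a b ha hb hab =>
    calc (f ∘ g) (a • x + b • y) = f (a • g x + b • g y) := by
          rw [Function.comp_apply, Convex.combo_affine_apply hab]
      _ < a • f (g x) + b • f (g y) := hf.2 hx hy (hg.ne hxy) ha hb hab⟩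

section Pointwise

variable {p x : ℝ}

lemma mix_pos (hp₀ : 0 ≤ p) (hp₁ : p ≤ 1) (hx : 0 < x) : 0 < p + (1 - p) * x := by
  rcases hp₁.lt_or_eq with hp₁ | rfl
  · nlinarith [mul_pos (sub_pos.2 hp₁) hx]
  · norm_num

lemma mixInv_pos (hp₀ : 0 ≤ p) (hp₁ : p ≤ 1) (hx : 0 < x) : 0 < mixInv p x :=
  one_div_pos.2 (mix_pos hp₀ hp₁ hx)

lemma mixInv_le_inv (hp₀ : 0 < p) (hp₁ : p ≤ 1) (hx : 0 < x) : mixInv p x ≤ p⁻¹ := by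
  rw [mixInv, one_div]
  exact inv_anti₀ hp₀ (by nlinarith [mul_nonneg (sub_nonneg.2 hp₁) hx.le])

lemma mixInv_le_inv_mul_inv (hp₀ : 0 ≤ p) (hp₁ : p < 1) (hx : 0 < x) :
    mixInv p x ≤ (1 - p)⁻¹ * x⁻¹ := by
  rw [mixInv, one_div, ← mul_inv]
  exact inv_anti₀ (mul_pos (sub_pos.2 hp₁) hx) (by linarith)

lemma hasDerivAt_mixInv (h : p + (1 - p) * x ≠ 0) :
    HasDerivAt (mixInv · x) (mixInvDeriv p x) p := by
  have hD : HasDerivAt (fun q => q + (1 - q) * x) (1 - x) p :=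
    ((hasDerivAt_id' p).add (((hasDerivAt_id' p).const_sub 1).mul_const x)).congr_deriv (by ring)
  have hderiv : mixInvDeriv p x = -(1 - x) / (p + (1 - p) * x) ^ 2 := by
    rw [mixInvDeriv, neg_sub]
  rw [hderiv]
  simp only [mixInv, one_div]
  exact hD.fun_inv h

lemma continuousAt_mixInvDeriv (h : p + (1 - p) * x ≠ 0) :
    ContinuousAt (mixInvDeriv · x) p := by
  unfold mixInvDeriv
  fun_prop (disch := positivity)

lemma measurable_mixInv (p : ℝ) : Measurable (mixInv p) := by
  unfold mixInv
  fun_prop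

lemma measurable_mixInvDeriv (p : ℝ) : Measurable (mixInvDeriv p) := by
  unfold mixInvDeriv
  fun_prop

lemma mixInvDeriv_le_sub_one (hp₀ : 0 ≤ p) (hp₁ : p ≤ 1) (hx : 0 < x) :
    mixInvDeriv p x ≤ x - 1 := by
  have hD := mix_pos hp₀ hp₁ hx
  rw [mixInvDeriv, div_le_iff₀ (by positivity)]
  nlinarith [mul_nonneg (sub_nonneg.2 hp₁) (sq_nonneg (x - 1))]

lemma neg_inv_sq_le_mixInvDeriv (hp₀ : 0 < p) (hp₁ : p ≤ 1) (hx : 0 < x) :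
    -(p ^ 2)⁻¹ ≤ mixInvDeriv p x := by
  have hpD : p ≤ p + (1 - p) * x := by nlinarith [mul_nonneg (sub_nonneg.2 hp₁) hx.le]
  calc -(p ^ 2)⁻¹ ≤ -((p + (1 - p) * x) ^ 2)⁻¹ :=
        neg_le_neg (inv_anti₀ (by positivity) (pow_le_pow_left₀ hp₀.le hpD 2))
    _ = -1 / (p + (1 - p) * x) ^ 2 := by rw [neg_div, one_div]
    _ ≤ mixInvDeriv p x := div_le_div_of_nonneg_right (by linarith) (sq_nonneg _)

lemma abs_mixInvDeriv_le {a b : ℝ} (ha : 0 < a) (hb : b < 1) (hp : p ∈ Icc a b) (hx : 0 < x) :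
    |mixInvDeriv p x| ≤ 1 / (a * (1 - b)) + 1 / a ^ 2 := by
  obtain ⟨hap, hpb⟩ := hp
  set D := p + (1 - p) * x
  have hDa : a ≤ D := by nlinarith [mul_nonneg (by linarith : (0:ℝ) ≤ 1 - p) hx.le]
  have hDx : (1 - b) * x ≤ D := by nlinarith
  have hD : 0 < D := ha.trans_le hDa
  calc |mixInvDeriv p x| ≤ (x + 1) / D ^ 2 := by
        rw [mixInvDeriv, abs_div, abs_of_pos (by positivity : 0 < D ^ 2)]
        gcongr
        exact abs_le.2 ⟨by linarith, by linarith⟩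
    _ = x / D ^ 2 + 1 / D ^ 2 := add_div _ _ _
    _ ≤ 1 / (a * (1 - b)) + 1 / a ^ 2 := by
        refine add_le_add ?_ (by gcongr)
        rw [div_le_div_iff₀ (by positivity) (by positivity), one_mul, sq]
        nlinarith [mul_le_mul hDa hDx (by positivity) hD.le]

lemma exists_mem_nhds_abs_mixInvDeriv_le (hp : p ∈ Ioo 0 1) :
    ∃ s ∈ 𝓝 p, s ⊆ Ioo 0 1 ∧ ∃ C, ∀ q ∈ s, ∀ x, 0 < x → |mixInvDeriv q x| ≤ C := by
  obtain ⟨a, ha, hap⟩ := exists_between hp.1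
  obtain ⟨b, hpb, hb⟩ := exists_between hp.2
  exact ⟨Ioo a b, Ioo_mem_nhds hap hpb, Ioo_subset_Ioo ha.le hb.le, _,
    fun q hq x hx => abs_mixInvDeriv_le ha hb (Ioo_subset_Icc_self hq) hx⟩

lemma mixInv_eq_zpow_comp_lineMap (x : ℝ) :
    (mixInv · x) = (fun y : ℝ => y ^ (-1 : ℤ)) ∘ AffineMap.lineMap x 1 := by
  funext p
  simp [mixInv, AffineMap.lineMap_apply_module]
  ring

lemma Icc_subset_preimage_lineMap (hx : 0 < x) :
    Icc 0 1 ⊆ AffineMap.lineMap (k := ℝ) x 1 ⁻¹' Ioi 0 := fun p hp => by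
  simpa [AffineMap.lineMap_apply_module, add_comm, mul_comm] using mix_pos hp.1 hp.2 hx

lemma convexOn_mixInv (hx : 0 < x) : ConvexOn ℝ (Icc 0 1) (mixInv · x) := by
  rw [mixInv_eq_zpow_comp_lineMap]
  exact ((strictConvexOn_zpow (by decide) (by decide)).convexOn.comp_affineMap _).subset
    (Icc_subset_preimage_lineMap hx) (convex_Icc 0 1)

lemma strictConvexOn_mixInv (hx : 0 < x) (hx₁ : x ≠ 1) :
    StrictConvexOn ℝ (Icc 0 1) (mixInv · x) := by
  rw [mixInv_eq_zpow_comp_lineMap]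
  exact ((strictConvexOn_zpow (by decide) (by decide)).comp_affineMap
    (AffineMap.lineMap_injective ℝ hx₁)).subset (Icc_subset_preimage_lineMap hx) (convex_Icc 0 1)

end Pointwise

section Integral

variable {Ω : Type*} {mΩ : MeasurableSpace Ω} {μ : Measure Ω}

theorem strictConvexOn_integral {E : Type*} [AddCommGroup E] [Module ℝ E] {s : Set E}
    {f : E → Ω → ℝ} (hs : Convex ℝ s) (hf : ∀ x ∈ s, Integrable (f x) μ)
    (hconv : ∀ᵐ ω ∂μ, ConvexOn ℝ s (f · ω)) (hstrict : ∃ᵐ ω ∂μ, StrictConvexOn ℝ s (f · ω)) :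
    StrictConvexOn ℝ s fun x => ∫ ω, f x ω ∂μ := by
  refine ⟨hs, fun x hx y hy hxy a b ha hb hab => ?_⟩
  have hfx := (hf x hx).const_mul a
  have hfy := (hf y hy).const_mul b
  have hcomb : Integrable (fun ω => a * f x ω + b * f y ω) μ := hfx.add hfy
  have hfxy := hf _ (hs hx hy ha.le hb.le hab)
  simp only [smul_eq_mul]
  rw [← integral_const_mul, ← integral_const_mul, ← integral_add hfx hfy, ← sub_pos,
    ← integral_sub hcomb hfxy, integral_pos_iff_support_of_nonneg_ae]
  · refine pos_iff_ne_zero.2 (mt (measure_mono_null fun ω hω => ?_) (frequently_ae_iff.1 hstrict))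
    exact (sub_pos.2 (hω.2 hx hy hxy ha hb hab)).ne'
  · filter_upwards [hconv] with ω hω
    exact sub_nonneg.2 (hω.2 hx hy ha.le hb.le hab)
  · exact hcomb.sub hfxy

theorem tendsto_lintegral_of_tendsto_ae_of_le_of_tendsto {ι : Type*} {l : Filter ι}
    [l.IsCountablyGenerated] [l.NeBot] {G : ι → Ω → ℝ≥0∞} {g : Ω → ℝ≥0∞} {u : ι → ℝ≥0∞}
    (hG : ∀ i, AEMeasurable (G i) μ) (hlim : ∀ᵐ ω ∂μ, Tendsto (G · ω) l (𝓝 (g ω)))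
    (hle : ∀ᶠ i in l, ∫⁻ ω, G i ω ∂μ ≤ u i) (hu : Tendsto u l (𝓝 (∫⁻ ω, g ω ∂μ))) :
    Tendsto (fun i => ∫⁻ ω, G i ω ∂μ) l (𝓝 (∫⁻ ω, g ω ∂μ)) := by
  refine tendsto_of_le_liminf_of_limsup_le ?_ ?_
  · calc ∫⁻ ω, g ω ∂μ = ∫⁻ ω, liminf (G · ω) l ∂μ :=
          lintegral_congr_ae (hlim.mono fun ω h => h.liminf_eq.symm)
      _ ≤ liminf (fun i => ∫⁻ ω, G i ω ∂μ) l := lintegral_liminf_le' hG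
  · exact (limsup_le_limsup hle).trans hu.limsup_eq.le

end Integral

section Mixture

variable {Ω : Type*} {mΩ : MeasurableSpace Ω} {P : Measure Ω} {X : Ω → ℝ}
  (hX : Measurable X) (hpos : ∀ᵐ ω ∂P, 0 < X ω)
include hX hpos

lemma integrable_mixInv [IsFiniteMeasure P] {p : ℝ} (hp : p ∈ Ioo 0 1) :
    Integrable (fun ω => mixInv p (X ω)) P := by
  refine .of_bound ((measurable_mixInv p).comp hX).aestronglyMeasurable p⁻¹ ?_
  filter_upwards [hpos] with ω hω
  rw [Real.norm_of_nonneg (mixInv_pos hp.1.le hp.2.le hω).le]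
  exact mixInv_le_inv hp.1 hp.2.le hω

lemma integrable_mixInvDeriv [IsFiniteMeasure P] {p : ℝ} (hp : p ∈ Ioo 0 1) :
    Integrable (fun ω => mixInvDeriv p (X ω)) P := by
  refine .of_bound ((measurable_mixInvDeriv p).comp hX).aestronglyMeasurable
    (1 / (p * (1 - p)) + 1 / p ^ 2) ?_
  filter_upwards [hpos] with ω hω
  exact abs_mixInvDeriv_le hp.1 hp.2 ⟨le_rfl, le_rfl⟩ hω

lemma hasDerivAt_integral_mixInv [IsFiniteMeasure P] {p : ℝ} (hp : p ∈ Ioo 0 1) :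
    HasDerivAt (fun q => ∫ ω, mixInv q (X ω) ∂P) (∫ ω, mixInvDeriv p (X ω) ∂P) p := by
  obtain ⟨s, hs, hsub, C, hC⟩ := exists_mem_nhds_abs_mixInvDeriv_le hp
  refine (hasDerivAt_integral_of_dominated_loc_of_deriv_le
    (F' := fun q ω => mixInvDeriv q (X ω)) (bound := fun _ => C) hs
    (.of_forall fun q => ((measurable_mixInv q).comp hX).aestronglyMeasurable)
    (integrable_mixInv hX hpos hp) ((measurable_mixInvDeriv p).comp hX).aestronglyMeasurable
    ?_ (integrable_const C) ?_).2
  · filter_upwards [hpos] with ω hω q hq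
    exact hC q hq _ hω
  · filter_upwards [hpos] with ω hω q hq
    exact hasDerivAt_mixInv (mix_pos (hsub hq).1.le (hsub hq).2.le hω).ne'

lemma continuousOn_integral_mixInvDeriv [IsFiniteMeasure P] :
    ContinuousOn (fun p => ∫ ω, mixInvDeriv p (X ω) ∂P) (Ioo 0 1) := by
  intro p hp
  obtain ⟨s, hs, -, C, hC⟩ := exists_mem_nhds_abs_mixInvDeriv_le hp
  refine (continuousAt_of_dominated (bound := fun _ => C)
    (.of_forall fun q => ((measurable_mixInvDeriv q).comp hX).aestronglyMeasurable) ?_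
    (integrable_const C) ?_).continuousWithinAt
  · filter_upwards [hs] with q hq
    filter_upwards [hpos] with ω hω
    exact hC q hq _ hω
  · filter_upwards [hpos] with ω hω
    exact continuousAt_mixInvDeriv (mix_pos hp.1.le hp.2.le hω).ne'

lemma strictConvexOn_integral_mixInv [IsFiniteMeasure P] (hX₁ : ∃ᵐ ω ∂P, X ω ≠ 1) :
    StrictConvexOn ℝ (Ioo 0 1) fun p => ∫ ω, mixInv p (X ω) ∂P := by
  refine strictConvexOn_integral (convex_Ioo 0 1) (fun p hp => integrable_mixInv hX hpos hp) ?_ ?_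
  · filter_upwards [hpos] with ω hω
    exact (convexOn_mixInv hω).subset Ioo_subset_Icc_self (convex_Ioo 0 1)
  · exact hX₁.mp (hpos.mono fun ω hω hω₁ =>
      (strictConvexOn_mixInv hω hω₁).subset Ioo_subset_Icc_self (convex_Ioo 0 1))

lemma tendsto_integral_mixInv_nhdsGT_zero [IsFiniteMeasure P] :
    Tendsto (fun p => ENNReal.ofReal (∫ ω, mixInv p (X ω) ∂P)) (𝓝[>] 0)
      (𝓝 (∫⁻ ω, ENNReal.ofReal (X ω)⁻¹ ∂P)) := by
  have hmem : Ioo 0 1 ∈ 𝓝[>] (0 : ℝ) := Ioo_mem_nhdsGT one_pos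
  have hlint : (fun p => ∫⁻ ω, ENNReal.ofReal (mixInv p (X ω)) ∂P) =ᶠ[𝓝[>] 0]
      fun p => ENNReal.ofReal (∫ ω, mixInv p (X ω) ∂P) := by
    filter_upwards [hmem] with p hp
    refine (ofReal_integral_eq_lintegral_ofReal (integrable_mixInv hX hpos hp) ?_).symm
    filter_upwards [hpos] with ω hω
    exact (mixInv_pos hp.1.le hp.2.le hω).le
  refine Tendsto.congr' hlint (tendsto_lintegral_of_tendsto_ae_of_le_of_tendsto
    (u := fun p => ENNReal.ofReal (1 - p)⁻¹ * ∫⁻ ω, ENNReal.ofReal (X ω)⁻¹ ∂P)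
    (fun p => ((measurable_mixInv p).comp hX).ennreal_ofReal.aemeasurable) ?_ ?_ ?_)
  · filter_upwards [hpos] with ω hω
    have hcont := (hasDerivAt_mixInv (x := X ω) (p := 0) (by simpa using hω.ne')).continuousAt
    simpa [mixInv] using ENNReal.tendsto_ofReal (hcont.tendsto.mono_left nhdsWithin_le_nhds)
  · filter_upwards [hmem] with p hp
    rw [← lintegral_const_mul' _ _ ENNReal.ofReal_ne_top]
    refine lintegral_mono_ae ?_
    filter_upwards [hpos] with ω hω
    rw [← ENNReal.ofReal_mul (inv_nonneg.2 (sub_nonneg.2 hp.2.le))]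
    exact ENNReal.ofReal_le_ofReal (mixInv_le_inv_mul_inv hp.1.le hp.2 hω)
  · have h : Tendsto (fun p : ℝ => ENNReal.ofReal (1 - p)⁻¹) (𝓝[>] 0) (𝓝 1) := by
      have hc : ContinuousAt (fun p : ℝ => (1 - p)⁻¹) 0 := by fun_prop (disch := norm_num)
      simpa using ENNReal.tendsto_ofReal (hc.tendsto.mono_left nhdsWithin_le_nhds)
    simpa using ENNReal.Tendsto.mul_const h (Or.inl one_ne_zero)

lemma tendsto_integral_mixInvDeriv_nhdsLT_one [IsProbabilityMeasure P] :
    Tendsto (fun p => ENNReal.ofReal (∫ ω, mixInvDeriv p (X ω) ∂P + 1)) (𝓝[<] 1)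
      (𝓝 (∫⁻ ω, ENNReal.ofReal (X ω) ∂P)) := by
  have hmem : Ioo (1 / 2) 1 ∈ 𝓝[<] (1 : ℝ) := Ioo_mem_nhdsLT (by norm_num)
  -- For `p > 1 / 2` the integrand is `≥ -4`, so shifting it by `4` makes it nonnegative.
  have hlint : (fun p => ∫⁻ ω, ENNReal.ofReal (mixInvDeriv p (X ω) + 4) ∂P - 3) =ᶠ[𝓝[<] 1]
      fun p => ENNReal.ofReal (∫ ω, mixInvDeriv p (X ω) ∂P + 1) := by
    filter_upwards [hmem] with p hp
    have hp' : p ∈ Ioo 0 1 := ⟨by linarith [hp.1], hp.2⟩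
    have hint := integrable_mixInvDeriv hX hpos hp'
    have hint4 : Integrable (fun ω => mixInvDeriv p (X ω) + 4) P := hint.add (integrable_const 4)
    have hnonneg : 0 ≤ᵐ[P] fun ω => mixInvDeriv p (X ω) + 4 := by
      filter_upwards [hpos] with ω hω
      have hp4 : (p ^ 2)⁻¹ ≤ 4 := by
        rw [inv_le_comm₀ (pow_pos hp'.1 2) (by norm_num)]; nlinarith [hp.1]
      linarith [neg_inv_sq_le_mixInvDeriv hp'.1 hp'.2.le hω, show (0 : Ω → ℝ) ω = 0 from rfl]
    rw [← ofReal_integral_eq_lintegral_ofReal hint4 hnonneg,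
      integral_add hint (integrable_const 4), integral_const, probReal_univ, one_smul,
      ← ENNReal.ofReal_ofNat 3, ← ENNReal.ofReal_sub _ (by norm_num)]
    ring_nf
  have hG : Tendsto (fun p => ∫⁻ ω, ENNReal.ofReal (mixInvDeriv p (X ω) + 4) ∂P) (𝓝[<] 1)
      (𝓝 (∫⁻ ω, ENNReal.ofReal (X ω + 3) ∂P)) := by
    refine tendsto_lintegral_of_tendsto_ae_of_le_of_tendsto
      (fun p => (((measurable_mixInvDeriv p).comp hX).add_const 4).ennreal_ofReal.aemeasurable)
      ?_ ?_ tendsto_const_nhds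
    · filter_upwards [hpos] with ω hω
      have hcont : ContinuousAt (fun p => mixInvDeriv p (X ω) + 4) 1 :=
        (continuousAt_mixInvDeriv (by norm_num)).add continuousAt_const
      have hval : mixInvDeriv 1 (X ω) + 4 = X ω + 3 := by norm_num [mixInvDeriv]; ring
      rw [← hval]
      exact ENNReal.tendsto_ofReal (hcont.tendsto.mono_left nhdsWithin_le_nhds)
    · filter_upwards [hmem] with p hp
      refine lintegral_mono_ae ?_
      filter_upwards [hpos] with ω hω
      exact ENNReal.ofReal_le_ofReal
        (by linarith [mixInvDeriv_le_sub_one (by linarith [hp.1] : (0:ℝ) ≤ p) hp.2.le hω])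
  have hsplit : ∫⁻ ω, ENNReal.ofReal (X ω + 3) ∂P = ∫⁻ ω, ENNReal.ofReal (X ω) ∂P + 3 := by
    calc ∫⁻ ω, ENNReal.ofReal (X ω + 3) ∂P = ∫⁻ ω, (ENNReal.ofReal (X ω) + 3) ∂P := by
          refine lintegral_congr_ae ?_
          filter_upwards [hpos] with ω hω
          rw [ENNReal.ofReal_add hω.le (by norm_num), ENNReal.ofReal_ofNat]
      _ = ∫⁻ ω, ENNReal.ofReal (X ω) ∂P + 3 := by
          rw [lintegral_add_right _ measurable_const, lintegral_const, measure_univ, mul_one]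
  have h := ((ENNReal.continuous_sub_right 3).tendsto _).comp hG
  rw [hsplit, ENNReal.add_sub_cancel_right ENNReal.ofNat_ne_top] at h
  exact h.congr' hlint

end Mixture

/-- **properties of the function `F`.** Let `X > 0` a.s. with
`P[X = 1] < 1`. Then `F(p) = E[1/(p + (1−p)·X)]` is continuously differentiable and
strictly convex on `(0,1)`, with `F(p) → E[X⁻¹]` as `p → 0` and `F′(p) → E[X] − 1` as
`p → 1` (both limits possibly `+∞`, encoded in `ℝ≥0∞` via `ENNReal.ofReal`, where
`F′(p) → E[X] − 1` is expressed as `ofReal (F′(p) + 1) → E[X]`). -/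
theorem F_convex_differentiable_limits
    {Ω : Type*} {𝒜 : MeasurableSpace Ω}
    (P : @Measure Ω 𝒜) [IsProbabilityMeasure P]
    (X : Ω → ℝ) (hX_meas : Measurable X) (hX_pos : ∀ᵐ ω ∂P, 0 < X ω)
    (hX_ne_one : P {ω | X ω = 1} < 1)
    (F : ℝ → ℝ) (hF : ∀ p ∈ Set.Ioo (0:ℝ) 1, F p = ∫ ω, 1 / (p + (1 - p) * X ω) ∂P) :
    StrictConvexOn ℝ (Set.Ioo (0:ℝ) 1) F ∧
    ∃ F' : ℝ → ℝ,
      (∀ p ∈ Set.Ioo (0:ℝ) 1, HasDerivAt F (F' p) p) ∧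
      ContinuousOn F' (Set.Ioo (0:ℝ) 1) ∧
      Tendsto (fun p => ENNReal.ofReal (F p)) (nhdsWithin 0 (Set.Ioo (0:ℝ) 1))
        (nhds (∫⁻ ω, ENNReal.ofReal (X ω)⁻¹ ∂P)) ∧
      Tendsto (fun p => ENNReal.ofReal (F' p + 1)) (nhdsWithin 1 (Set.Ioo (0:ℝ) 1))
        (nhds (∫⁻ ω, ENNReal.ofReal (X ω) ∂P)) := by
  have hF_eq : EqOn F (fun p => ∫ ω, mixInv p (X ω) ∂P) (Ioo 0 1) := hF
  have hX_ne_one_ae : ∃ᵐ ω ∂P, X ω ≠ 1 := fun h => hX_ne_one.ne <| by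
    rw [← measure_univ (μ := P)]
    exact (ae_iff_measure_eq (measurableSet_eq_fun hX_meas measurable_const).nullMeasurableSet).1
      (h.mono fun ω => not_not.1)
  refine ⟨(strictConvexOn_integral_mixInv hX_meas hX_pos hX_ne_one_ae).congr hF_eq.symm,
    fun p => ∫ ω, mixInvDeriv p (X ω) ∂P, fun p hp => ?_,
    continuousOn_integral_mixInvDeriv hX_meas hX_pos, ?_, ?_⟩
  · exact (hasDerivAt_integral_mixInv hX_meas hX_pos hp).congr_of_eventuallyEq
      (hF_eq.eventuallyEq_of_mem (isOpen_Ioo.mem_nhds hp))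
  · rw [nhdsWithin_Ioo_eq_nhdsGT one_pos]
    exact (tendsto_integral_mixInv_nhdsGT_zero hX_meas hX_pos).congr'
      ((hF_eq.symm.eventuallyEq_of_mem (Ioo_mem_nhdsGT one_pos)).fun_comp ENNReal.ofReal)
  · rw [nhdsWithin_Ioo_eq_nhdsLT one_pos]
    exact tendsto_integral_mixInvDeriv_nhdsLT_one hX_meas hX_pos
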